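/- arXiv:math/0110294 — 2 statements merged into one kernel-verified Lean document; each statement's English description precedes it below -/
import Mathlib

section
/- Let A be a C*-algebra and τ₀ a weight on A₊. The set F(τ₀) := { ψ ∈ A*₊ : ∃ ε > 0, (1+ε)ψ ≤ τ₀ } is upward directed: for ψ₁, ψ₂ ∈ F(τ₀) there exists ψ ∈ F(τ₀) with ψ₁ ≤ ψ and ψ₂ ≤ ψ. Consequently τ(a) := sup{ψ(a) : ψ ∈ A*₊, ψ ≤ τ₀} equals the pointwise limit over the directed set F(τ₀), and τ is additive and lower semicontinuous on A₊. -/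
open scoped ENNReal

variable {A : Type*} [NormedRing A] [StarRing A] [CStarRing A]
  [NormedAlgebra ℂ A] [StarModule ℂ A] [CompleteSpace A]
  [PartialOrder A] [StarOrderedRing A]

/-- A weight on the positive cone of a C*-algebra: additive and positively homogeneous. -/
def IsWeight (τ : A → ℝ≥0∞) : Prop :=
  (∀ a b : A, 0 ≤ a → 0 ≤ b → τ (a + b) = τ a + τ b) ∧
  (∀ l : ℝ, 0 < l → ∀ a : A, 0 ≤ a → τ ((l : ℂ) • a) = ENNReal.ofReal l * τ a)

/-- A positive bounded linear functional on a C*-algebra. -/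
def IsPosFunctional (ψ : A →L[ℂ] ℂ) : Prop :=
  ∀ a : A, 0 ≤ a → 0 ≤ (ψ a).re ∧ (ψ a).im = 0

/-- `ψ ≤ τ₀` on the positive cone. -/
def Dominated (ψ : A →L[ℂ] ℂ) (τ₀ : A → ℝ≥0∞) : Prop :=
  ∀ a : A, 0 ≤ a → ENNReal.ofReal (ψ a).re ≤ τ₀ a

/-- The (lower-)semicontinuous regularization of a weight `τ₀`:
`τ(a) = sup { ψ(a) : ψ ∈ A*₊, ψ ≤ τ₀ }`. -/
noncomputable def regWeight (τ₀ : A → ℝ≥0∞) (a : A) : ℝ≥0∞ :=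
  ⨆ ψ ∈ {ψ : A →L[ℂ] ℂ | IsPosFunctional ψ ∧ Dominated ψ τ₀}, ENNReal.ofReal (ψ a).re

/-- The set `F(τ₀)` of positive functionals `ψ` with `(1+ε)ψ ≤ τ₀` for some `ε > 0`. -/
def FSet (τ₀ : A → ℝ≥0∞) : Set (A →L[ℂ] ℂ) :=
  {ψ | IsPosFunctional ψ ∧ ∃ ε : ℝ, 0 < ε ∧
    ∀ a : A, 0 ≤ a → ENNReal.ofReal ((1 + ε) * (ψ a).re) ≤ τ₀ a}

set_option linter.unusedSectionVars false

namespace QVaux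

noncomputable local instance : CStarAlgebra A :=
  { ‹NormedRing A›, ‹StarRing A›, ‹CStarRing A›, ‹NormedAlgebra ℂ A›, ‹StarModule ℂ A›,
    ‹CompleteSpace A› with }

/-! ### Elementary facts about positive functionals -/

lemma rP_add (ψ : A →L[ℂ] ℂ) (x y : A) : (ψ (x + y)).re = (ψ x).re + (ψ y).re := by
  rw [map_add, Complex.add_re]

lemma rP_csmul (ψ : A →L[ℂ] ℂ) (r : ℝ) (x : A) : (ψ ((r : ℂ) • x)).re = r * (ψ x).re := by
  rw [map_smul, smul_eq_mul, Complex.re_ofReal_mul]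

lemma rP_rsmul (ψ : A →L[ℂ] ℂ) (r : ℝ) (x : A) : (ψ (r • x)).re = r * (ψ x).re := by
  rw [← algebraMap_smul ℂ r x, Complex.coe_algebraMap, rP_csmul]

lemma rP_mono {ψ : A →L[ℂ] ℂ} (hψ : IsPosFunctional ψ) {x y : A} (h : x ≤ y) :
    (ψ x).re ≤ (ψ y).re := by
  have h0 : 0 ≤ y - x := sub_nonneg.2 h
  have hxy : x + (y - x) = y := by abel
  calc (ψ x).re ≤ (ψ x).re + (ψ (y - x)).re := le_add_of_nonneg_right (hψ _ h0).1
    _ = (ψ y).re := by rw [← rP_add, hxy]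

lemma star_rsmul (r : ℝ) (x : A) : star (r • x) = r • star x := by
  rw [← algebraMap_smul ℂ r x, star_smul, ← algebraMap_smul ℂ r (star x)]
  congr 1
  simp [Complex.coe_algebraMap, Complex.conj_ofReal]

/-! ### Cauchy–Schwarz for positive functionals -/

lemma cross_bound {ψ : A →L[ℂ] ℂ} (hψ : IsPosFunctional ψ) (a b : A) :
    (ψ (star a * b)).re + (ψ (star b * a)).re ≤
      2 * Real.sqrt ((ψ (star a * a)).re * (ψ (star b * b)).re) := by
  set q0 : ℝ := (ψ (star a * a)).re with hq0
  set q2 : ℝ := (ψ (star b * b)).re with hq2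
  set q1 : ℝ := (ψ (star a * b)).re + (ψ (star b * a)).re with hq1
  have hq0' : 0 ≤ q0 := (hψ _ (star_mul_self_nonneg a)).1
  have hq2' : 0 ≤ q2 := (hψ _ (star_mul_self_nonneg b)).1
  have key : ∀ r : ℝ, 0 ≤ q2 * (r * r) + q1 * r + q0 := by
    intro r
    have hpos : (0 : A) ≤ star (a + (r : ℂ) • b) * (a + (r : ℂ) • b) :=
      star_mul_self_nonneg _
    have hexp : star (a + (r : ℂ) • b) * (a + (r : ℂ) • b)
        = star a * a + (r : ℂ) • (star a * b) + (r : ℂ) • (star b * a)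
          + ((r * r : ℝ) : ℂ) • (star b * b) := by
      rw [star_add, star_smul]
      simp only [Complex.star_def, Complex.conj_ofReal]
      simp only [add_mul, mul_add, smul_add, smul_mul_assoc, mul_smul_comm, smul_smul]
      push_cast
      abel
    have := (hψ _ hpos).1
    rw [hexp] at this
    rw [rP_add, rP_add, rP_add, rP_csmul, rP_csmul, rP_csmul] at this
    rw [hq0, hq1, hq2]
    nlinarith [this]
  have hd := discrim_le_zero key
  rw [discrim] at hd
  have hq1sq : q1 ^ 2 ≤ 4 * (q0 * q2) := by nlinarith [hd]
  calc q1 ≤ |q1| := le_abs_self _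
    _ = Real.sqrt (q1 ^ 2) := (Real.sqrt_sq_eq_abs q1).symm
    _ ≤ Real.sqrt (4 * (q0 * q2)) := Real.sqrt_le_sqrt hq1sq
    _ = 2 * Real.sqrt (q0 * q2) := by
        rw [show (4 : ℝ) * (q0 * q2) = 2 ^ 2 * (q0 * q2) by norm_num,
          Real.sqrt_mul (by positivity), Real.sqrt_sq (by norm_num)]

lemma young {u v γ : ℝ} (hu : 0 ≤ u) (hv : 0 ≤ v) (hγ : 0 < γ) :
    u + v + 2 * Real.sqrt (u * v) ≤ (1 + γ) * u + (1 + γ⁻¹) * v := by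
  have h2 : Real.sqrt (u * v) = Real.sqrt (γ * u) * Real.sqrt (γ⁻¹ * v) := by
    rw [← Real.sqrt_mul (by positivity)]
    congr 1
    field_simp
  have h3 : 2 * Real.sqrt (u * v) ≤ γ * u + γ⁻¹ * v := by
    nlinarith [sq_nonneg (Real.sqrt (γ * u) - Real.sqrt (γ⁻¹ * v)),
      Real.sq_sqrt (show (0:ℝ) ≤ γ * u by positivity),
      Real.sq_sqrt (show (0:ℝ) ≤ γ⁻¹ * v by positivity),
      Real.sqrt_nonneg (γ * u), Real.sqrt_nonneg (γ⁻¹ * v)]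
  linarith

/-! ### The CFC element `S = z(z+t)⁻¹` -/

lemma exists_S {z : A} (hz : 0 ≤ z) {t : ℝ} (ht : 0 < t) :
    ∃ S : A, IsSelfAdjoint S ∧ 0 ≤ S ∧ (z + t • (1 : A)) * S = z ∧ z * S ≤ z ∧
      Commute z S := by
  have hzsa : IsSelfAdjoint z := IsSelfAdjoint.of_nonneg hz
  have hsp : ∀ x ∈ spectrum ℝ z, 0 ≤ x := fun x hx => spectrum_nonneg_of_nonneg hz hx
  have hne : ∀ x ∈ spectrum ℝ z, x + t ≠ 0 := fun x hx => by
    have := hsp x hx; positivity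
  set f : ℝ → ℝ := fun x => x * (x + t)⁻¹ with hf
  have hcont : ContinuousOn f (spectrum ℝ z) := by
    refine ContinuousOn.mul continuousOn_id (ContinuousOn.inv₀ ?_ hne)
    exact (continuous_id.add continuous_const).continuousOn
  have hcont2 : ContinuousOn (fun x : ℝ => x + t) (spectrum ℝ z) :=
    (continuous_id.add continuous_const).continuousOn
  -- identities
  have hxf : cfc (fun x : ℝ => x * f x) z = z * cfc f z := by
    rw [cfc_mul (fun x : ℝ => x) f z continuousOn_id hcont, cfc_id' ℝ z]
  have hfx : cfc (fun x : ℝ => f x * x) z = cfc f z * z := by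
    rw [cfc_mul f (fun x : ℝ => x) z hcont continuousOn_id, cfc_id' ℝ z]
  have hzt : cfc (fun x : ℝ => (x + t) * f x) z = (z + t • (1 : A)) * cfc f z := by
    rw [cfc_mul (fun x : ℝ => x + t) f z hcont2 hcont]
    congr 1
    rw [cfc_add (a := z) (fun x : ℝ => x) (fun _ : ℝ => t) continuousOn_id continuousOn_const,
      cfc_id' ℝ z, cfc_const t z, Algebra.algebraMap_eq_smul_one]
  refine ⟨cfc f z, cfc_predicate f z, ?_, ?_, ?_, ?_⟩
  · exact cfc_nonneg fun x hx => by
      have := hsp x hx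
      positivity
  · rw [← hzt]
    calc cfc (fun x : ℝ => (x + t) * f x) z = cfc (id : ℝ → ℝ) z := by
          refine cfc_congr fun x hx => ?_
          rw [hf]
          simp only [id]
          rw [mul_comm x, ← mul_assoc, mul_inv_cancel₀ (hne x hx), one_mul]
      _ = z := cfc_id ℝ z
  · rw [← hxf]
    calc cfc (fun x : ℝ => x * f x) z ≤ cfc (id : ℝ → ℝ) z := by
          refine cfc_mono fun x hx => ?_
          have hx0 := hsp x hx
          have hxt : 0 < x + t := by positivity
          have hfle : f x ≤ 1 := by
            rw [hf]
            calc x * (x + t)⁻¹ ≤ (x + t) * (x + t)⁻¹ :=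
                  mul_le_mul_of_nonneg_right (by linarith) (by positivity)
              _ = 1 := mul_inv_cancel₀ (ne_of_gt hxt)
          calc x * f x ≤ x * 1 := mul_le_mul_of_nonneg_left hfle hx0
            _ = id x := by simp
      _ = z := cfc_id ℝ z
  · show z * cfc f z = cfc f z * z
    rw [← hxf, ← hfx]
    exact cfc_congr fun x _ => mul_comm x (f x)

/-! ### The two halves of the master inequality -/

lemma master_half {ψ : A →L[ℂ] ℂ} (hψ : IsPosFunctional ψ) {γ : ℝ} (hγ : 0 < γ)
    {B S : A} (hB : 0 ≤ B) (hS : IsSelfAdjoint S)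
    {m : ℝ} (hm : (ψ (star (1 - S) * B * (1 - S))).re ≤ m) :
    (ψ B).re ≤ (1 + γ) * (ψ (star S * B * S)).re + (1 + γ⁻¹) * m := by
  obtain ⟨R, hRsa, hRR⟩ : ∃ R : A, IsSelfAdjoint R ∧ R * R = B := by
    refine ⟨cfc Real.sqrt B, cfc_predicate _ B, ?_⟩
    rw [← cfc_mul Real.sqrt Real.sqrt B Real.continuous_sqrt.continuousOn
          Real.continuous_sqrt.continuousOn]
    calc cfc (fun x => Real.sqrt x * Real.sqrt x) B = cfc (id : ℝ → ℝ) B :=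
          cfc_congr fun x hx => Real.mul_self_sqrt (spectrum_nonneg_of_nonneg hB hx)
      _ = B := cfc_id ℝ B
  set a' := R * S with ha'
  set b' := R - R * S with hb'
  have hsa' : star a' = S * R := by rw [ha', star_mul, hS.star_eq, hRsa.star_eq]
  have hsb' : star b' = R - S * R := by
    rw [hb', star_sub, star_mul, hS.star_eq, hRsa.star_eq]
  have e1 : star a' * a' = star S * B * S := by
    rw [hsa', ha', hS.star_eq, ← hRR]
    noncomm_ring
  have e2 : star b' * b' = star (1 - S) * B * (1 - S) := by
    rw [hsb', hb', star_sub, star_one, hS.star_eq, ← hRR]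
    noncomm_ring
  have idB : B = star a' * a' + star b' * b' + (star a' * b' + star b' * a') := by
    rw [hsa', hsb', ha', hb', ← hRR]
    noncomm_ring
  have hval : (ψ B).re = (ψ (star a' * a')).re + (ψ (star b' * b')).re
      + ((ψ (star a' * b')).re + (ψ (star b' * a')).re) := by
    conv_lhs => rw [idB]
    rw [rP_add, rP_add, rP_add]
  have hcross := cross_bound hψ a' b'
  set u := (ψ (star a' * a')).re with hu_def
  set v := (ψ (star b' * b')).re with hv_def
  have hu : 0 ≤ u := (hψ _ (star_mul_self_nonneg a')).1
  have hv : 0 ≤ v := (hψ _ (star_mul_self_nonneg b')).1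
  have hvm : v ≤ m := by rw [hv_def, e2]; exact hm
  have hm0 : 0 ≤ m := hv.trans hvm
  have hsqrt : Real.sqrt (u * v) ≤ Real.sqrt (u * m) :=
    Real.sqrt_le_sqrt (mul_le_mul_of_nonneg_left hvm hu)
  have : (ψ B).re ≤ u + m + 2 * Real.sqrt (u * m) := by
    rw [hval]
    have h1 : (ψ (star a' * b')).re + (ψ (star b' * a')).re ≤ 2 * Real.sqrt (u * v) := hcross
    nlinarith [hsqrt]
  calc (ψ B).re ≤ u + m + 2 * Real.sqrt (u * m) := this
    _ ≤ (1 + γ) * u + (1 + γ⁻¹) * m := young hu hm0 hγ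
    _ = (1 + γ) * (ψ (star S * B * S)).re + (1 + γ⁻¹) * m := by rw [hu_def, e1]

/-! ### The master inequality -/

lemma weight_mono {τ₀ : A → ℝ≥0∞} (hτ : IsWeight τ₀) {x y : A} (hx : 0 ≤ x) (hxy : x ≤ y) :
    τ₀ x ≤ τ₀ y := by
  have h := hτ.1 x (y - x) hx (sub_nonneg.2 hxy)
  have hxyx : x + (y - x) = y := by abel
  rw [hxyx] at h
  rw [h]
  exact le_self_add

lemma master {τ₀ : A → ℝ≥0∞} (hτ : IsWeight τ₀)
    {ψ₁ ψ₂ : A →L[ℂ] ℂ} (hψ₁ : IsPosFunctional ψ₁) (hψ₂ : IsPosFunctional ψ₂)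
    {ε : ℝ} (hε : 0 < ε)
    (hd₁ : ∀ x : A, 0 ≤ x → ENNReal.ofReal ((1 + ε) * (ψ₁ x).re) ≤ τ₀ x)
    (hd₂ : ∀ x : A, 0 ≤ x → ENNReal.ofReal ((1 + ε) * (ψ₂ x).re) ≤ τ₀ x)
    {γ : ℝ} (hγ : 0 < γ) {z B D : A} (hz : 0 ≤ z) (hB : 0 ≤ B) (hD : 0 ≤ D)
    (hfz : τ₀ z ≠ ⊤) {t : ℝ} (ht : 0 < t) (hBD : B + D ≤ z + t • (1 : A)) :
    (ψ₁ B).re + (ψ₂ D).re ≤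
      (1 + γ) / (1 + ε) * (τ₀ z).toReal + (1 + γ⁻¹) * (t * ((ψ₁ 1).re + (ψ₂ 1).re)) := by
  obtain ⟨S, hSsa, hS0, hmulS, hzS, hcomm⟩ := exists_S hz ht
  have hc2 : Commute S (z + t • (1 : A)) :=
    (hcomm.symm).add_right ((Commute.one_right S).smul_right t)
  have hSzt : S * (z + t • (1 : A)) = z := by rw [hc2.eq, hmulS]
  -- P-side
  have hPP : star S * (B + D) * S ≤ z := by
    refine (star_left_conjugate_le_conjugate hBD S).trans ?_
    rw [hSsa.star_eq, hSzt]
    exact hzS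
  have hPsplit : star S * (B + D) * S = star S * B * S + star S * D * S := by
    rw [mul_add, add_mul]
  have hP1 : 0 ≤ star S * B * S := star_left_conjugate_nonneg hB S
  have hP2 : 0 ≤ star S * D * S := star_left_conjugate_nonneg hD S
  -- Q-side
  have hBu : B ≤ z + t • (1 : A) := le_trans (le_add_of_nonneg_right hD) hBD
  have hDu : D ≤ z + t • (1 : A) := le_trans (le_add_of_nonneg_left hB) hBD
  have hQle : ∀ {W : A}, W ≤ z + t • (1 : A) →
      star (1 - S) * W * (1 - S) ≤ t • (1 : A) := by
    intro W hW
    refine (star_left_conjugate_le_conjugate hW (1 - S)).trans ?_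
    have hstar1S : star (1 - S : A) = 1 - S := by rw [star_sub, star_one, hSsa.star_eq]
    rw [hstar1S]
    have h1 : (z + t • (1 : A)) * (1 - S) = t • (1 : A) := by
      rw [mul_sub, mul_one, hmulS]
      abel
    calc (1 - S) * (z + t • (1:A)) * (1 - S) = (1 - S) * ((z + t • (1:A)) * (1 - S)) := by
          rw [mul_assoc]
      _ = (1 - S) * (t • (1:A)) := by rw [h1]
      _ = t • (1:A) - t • S := by rw [mul_smul_comm, mul_one, smul_sub]
      _ ≤ t • (1:A) := sub_le_self _ (smul_nonneg ht.le hS0)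
  have hQB : (ψ₁ (star (1 - S) * B * (1 - S))).re ≤ t * (ψ₁ 1).re := by
    have := rP_mono hψ₁ (hQle hBu)
    rwa [rP_rsmul] at this
  have hQD : (ψ₂ (star (1 - S) * D * (1 - S))).re ≤ t * (ψ₂ 1).re := by
    have := rP_mono hψ₂ (hQle hDu)
    rwa [rP_rsmul] at this
  have h1 := master_half hψ₁ hγ hB hSsa hQB
  have h2 := master_half hψ₂ hγ hD hSsa hQD
  -- chain through τ₀
  have hPz1 : star S * B * S ≤ z :=
    le_trans (le_add_of_nonneg_right hP2) (le_of_eq_of_le hPsplit.symm hPP)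
  have hPz2 : star S * D * S ≤ z :=
    le_trans (le_add_of_nonneg_left hP1) (le_of_eq_of_le hPsplit.symm hPP)
  have hfP1 : τ₀ (star S * B * S) ≠ ⊤ := ne_top_of_le_ne_top hfz (weight_mono hτ hP1 hPz1)
  have hfP2 : τ₀ (star S * D * S) ≠ ⊤ := ne_top_of_le_ne_top hfz (weight_mono hτ hP2 hPz2)
  have hsum : τ₀ (star S * B * S) + τ₀ (star S * D * S) ≤ τ₀ z := by
    rw [← hτ.1 _ _ hP1 hP2]
    exact weight_mono hτ (add_nonneg hP1 hP2) (le_of_eq_of_le hPsplit.symm hPP)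
  have hr1 : (1 + ε) * (ψ₁ (star S * B * S)).re ≤ (τ₀ (star S * B * S)).toReal :=
    (ENNReal.ofReal_le_iff_le_toReal hfP1).mp (hd₁ _ hP1)
  have hr2 : (1 + ε) * (ψ₂ (star S * D * S)).re ≤ (τ₀ (star S * D * S)).toReal :=
    (ENNReal.ofReal_le_iff_le_toReal hfP2).mp (hd₂ _ hP2)
  have hToReal : (τ₀ (star S * B * S)).toReal + (τ₀ (star S * D * S)).toReal
      ≤ (τ₀ z).toReal := by
    rw [← ENNReal.toReal_add hfP1 hfP2]
    exact ENNReal.toReal_mono hfz hsum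
  -- final real arithmetic
  set u1 := (ψ₁ (star S * B * S)).re
  set u2 := (ψ₂ (star S * D * S)).re
  have hε1 : (0:ℝ) < 1 + ε := by linarith
  have hγ1 : (0:ℝ) ≤ 1 + γ := by linarith
  have huu : u1 + u2 ≤ (τ₀ z).toReal / (1 + ε) := by
    rw [le_div_iff₀ hε1]
    nlinarith [hr1, hr2, hToReal]
  have hmul : (1 + γ) * (u1 + u2) ≤ (1 + γ) / (1 + ε) * (τ₀ z).toReal := by
    rw [div_mul_eq_mul_div, le_div_iff₀ hε1]
    calc (1 + γ) * (u1 + u2) * (1 + ε) ≤ (1 + γ) * ((τ₀ z).toReal / (1 + ε)) * (1 + ε) := by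
          have := mul_le_mul_of_nonneg_left huu hγ1
          nlinarith [this]
      _ = (1 + γ) * (τ₀ z).toReal := by field_simp
  nlinarith [h1, h2, hmul]

/-! ### Complexification of a real functional -/

lemma cplx_exists (g : A →ₗ[ℝ] ℝ) {C : ℝ} (hC0 : 0 ≤ C) (hC : ∀ x, |g x| ≤ C * ‖x‖) :
    ∃ ψ : A →L[ℂ] ℂ, ∀ a : A, star a = a → ψ a = (g a : ℂ) := by
  classical
  set hP : A → A := fun x => (2⁻¹ : ℝ) • (x + star x) with hhP
  set sP : A → A := fun x => (2⁻¹ : ℝ) • ((-Complex.I) • (x - star x)) with hsP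
  have hP_add : ∀ x y, hP (x + y) = hP x + hP y := by
    intro x y
    simp only [hhP, star_add]
    rw [show x + y + (star x + star y) = (x + star x) + (y + star y) from by abel, smul_add]
  have sP_add : ∀ x y, sP (x + y) = sP x + sP y := by
    intro x y
    simp only [hsP, star_add]
    rw [show x + y - (star x + star y) = (x - star x) + (y - star y) from by abel,
      smul_add, smul_add]
  have hP_rsmul : ∀ (r : ℝ) (x : A), hP (r • x) = r • hP x := by
    intro r x
    simp only [hhP]
    rw [star_rsmul, ← smul_add, smul_comm]
  have sP_rsmul : ∀ (r : ℝ) (x : A), sP (r • x) = r • sP x := by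
    intro r x
    simp only [hsP]
    rw [star_rsmul, ← smul_sub, smul_comm (-Complex.I) r, smul_comm (2⁻¹ : ℝ) r]
  have hstarI : star (Complex.I) = -Complex.I := by
    simp [Complex.star_def, Complex.conj_I]
  have hP_I : ∀ x, hP (Complex.I • x) = -sP x := by
    intro x
    simp only [hhP, hsP]
    rw [star_smul, hstarI]
    simp only [neg_smul, smul_neg, neg_neg, smul_sub, smul_add, sub_eq_add_neg]
    abel
  have sP_I : ∀ x, sP (Complex.I • x) = hP x := by
    intro x
    simp only [hhP, hsP]
    rw [star_smul, hstarI]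
    rw [show Complex.I • x - (-Complex.I) • star x = Complex.I • (x + star x) from by
      rw [neg_smul, sub_neg_eq_add, ← smul_add]]
    rw [smul_smul, neg_mul, Complex.I_mul_I, neg_neg, one_smul]
  set F : A → ℂ := fun x => (g (hP x) : ℂ) + Complex.I * (g (sP x) : ℂ) with hF
  have F_add : ∀ x y, F (x + y) = F x + F y := by
    intro x y
    simp only [hF, hP_add, sP_add, map_add]
    push_cast
    ring
  have F_rsmul : ∀ (r : ℝ) (x : A), F (r • x) = (r : ℂ) * F x := by
    intro r x
    simp only [hF, hP_rsmul, sP_rsmul, map_smul, smul_eq_mul]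
    push_cast
    ring
  have F_I : ∀ x, F (Complex.I • x) = Complex.I * F x := by
    intro x
    simp only [hF, hP_I, sP_I, map_neg]
    push_cast
    ring_nf
    rw [Complex.I_sq]
    ring
  have F_smul : ∀ (c : ℂ) (x : A), F (c • x) = c * F x := by
    intro c x
    have hcoe : ∀ (r : ℝ) (y : A), (r : ℂ) • y = r • y := fun r y => by
      rw [show ((r : ℝ) : ℂ) = algebraMap ℝ ℂ r from rfl, algebraMap_smul]
    have hdec : c • x = c.re • x + c.im • (Complex.I • x) := by
      rw [← hcoe c.re x, ← hcoe c.im (Complex.I • x), smul_smul, ← add_smul,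
        Complex.re_add_im c]
    rw [hdec, F_add, F_rsmul, F_rsmul, F_I]
    rw [show ((c.im : ℂ)) * (Complex.I * F x) = ((c.re : ℂ) + (c.im : ℂ) * Complex.I) * F x
        - (c.re : ℂ) * F x from by ring, mul_comm (c.im : ℂ) Complex.I,
      mul_comm Complex.I (c.im : ℂ)]
    rw [Complex.re_add_im c]
    ring
  set Flin : A →ₗ[ℂ] ℂ :=
    { toFun := F
      map_add' := F_add
      map_smul' := fun c x => by simpa using F_smul c x } with hFlin
  have hnorm : ∀ x : A, ‖Flin x‖ ≤ 2 * C * ‖x‖ := by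
    intro x
    have h1 : ‖hP x‖ ≤ ‖x‖ := by
      simp only [hhP]
      rw [norm_smul]
      calc ‖(2⁻¹ : ℝ)‖ * ‖x + star x‖ ≤ 2⁻¹ * (‖x‖ + ‖star x‖) := by
            rw [Real.norm_eq_abs, abs_of_pos (by norm_num)]
            have := norm_add_le x (star x)
            nlinarith [this]
        _ = ‖x‖ := by rw [norm_star]; ring
    have h2 : ‖sP x‖ ≤ ‖x‖ := by
      simp only [hsP]
      rw [norm_smul, norm_smul]
      calc ‖(2⁻¹ : ℝ)‖ * (‖-Complex.I‖ * ‖x - star x‖) ≤ 2⁻¹ * (1 * (‖x‖ + ‖star x‖)) := by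
            rw [Real.norm_eq_abs, abs_of_pos (by norm_num), norm_neg, Complex.norm_I]
            have := norm_sub_le x (star x)
            nlinarith [this]
        _ = ‖x‖ := by rw [norm_star]; ring
    calc ‖Flin x‖ = ‖(g (hP x) : ℂ) + Complex.I * (g (sP x) : ℂ)‖ := rfl
      _ ≤ ‖(g (hP x) : ℂ)‖ + ‖Complex.I * (g (sP x) : ℂ)‖ := norm_add_le _ _
      _ = |g (hP x)| + |g (sP x)| := by
          rw [norm_mul, Complex.norm_I, one_mul, Complex.norm_real, Complex.norm_real,
            Real.norm_eq_abs, Real.norm_eq_abs]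
      _ ≤ C * ‖hP x‖ + C * ‖sP x‖ := add_le_add (hC _) (hC _)
      _ ≤ C * ‖x‖ + C * ‖x‖ := add_le_add (mul_le_mul_of_nonneg_left h1 hC0)
            (mul_le_mul_of_nonneg_left h2 hC0)
      _ = 2 * C * ‖x‖ := by ring
  refine ⟨LinearMap.mkContinuous Flin (2 * C) hnorm, ?_⟩
  intro a ha
  have h1 : hP a = a := by
    simp only [hhP, ha]
    rw [← two_smul ℝ a, smul_smul]
    norm_num
  have h2 : sP a = 0 := by
    simp only [hsP, ha, sub_self, smul_zero]
  show F a = (g a : ℂ)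
  simp only [hF, h1, h2, map_zero]
  push_cast
  ring

lemma le_of_forall_pos_le_add' {a b : ℝ} (h : ∀ η : ℝ, 0 < η → a ≤ b + η) : a ≤ b := by
  by_contra hc
  push_neg at hc
  have := h ((a - b) / 2) (by linarith)
  linarith

/-! ### The Hahn-Banach construction -/

lemma directed_main {τ₀ : A → ℝ≥0∞} (hτ : IsWeight τ₀) (hτ0 : τ₀ 0 = 0)
    {ψ₁ ψ₂ : A →L[ℂ] ℂ} (hψ₁ : IsPosFunctional ψ₁) (hψ₂ : IsPosFunctional ψ₂)
    {ε : ℝ} (hε : 0 < ε)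
    (hd₁ : ∀ x : A, 0 ≤ x → ENNReal.ofReal ((1 + ε) * (ψ₁ x).re) ≤ τ₀ x)
    (hd₂ : ∀ x : A, 0 ≤ x → ENNReal.ofReal ((1 + ε) * (ψ₂ x).re) ≤ τ₀ x) :
    ∃ ψ : A →L[ℂ] ℂ, IsPosFunctional ψ ∧
      (∀ a : A, 0 ≤ a → ENNReal.ofReal ((1 + ε / 2) * (ψ a).re) ≤ τ₀ a) ∧
      (∀ a : A, 0 ≤ a → (ψ₁ a).re ≤ (ψ a).re) ∧
      (∀ a : A, 0 ≤ a → (ψ₂ a).re ≤ (ψ a).re) := by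
  set δ : ℝ := ε / 2 with hδdef
  set γ : ℝ := ε / (2 + ε) with hγdef
  have hδ : 0 < δ := by rw [hδdef]; linarith
  have hγ : 0 < γ := by rw [hγdef]; positivity
  have hδ1 : (0:ℝ) < 1 + δ := by linarith
  have hε1 : (0:ℝ) < 1 + ε := by linarith
  have hγδ : (1 + γ) / (1 + ε) = 1 / (1 + δ) := by
    rw [hγdef, hδdef]
    field_simp
    ring
  set Φ : ℝ := (ψ₁ 1).re + (ψ₂ 1).re with hΦdef
  have hΦ : 0 ≤ Φ := add_nonneg (hψ₁ 1 zero_le_one).1 (hψ₂ 1 zero_le_one).1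
  set K : ℝ := (1 + γ⁻¹) * Φ with hKdef
  have hK : 0 ≤ K := by
    have : (0:ℝ) ≤ 1 + γ⁻¹ := by positivity
    exact mul_nonneg this hΦ
  set PS : A → Set ℝ := fun x =>
    {r | ∃ z B D c : A, 0 ≤ z ∧ 0 ≤ B ∧ 0 ≤ D ∧ τ₀ z ≠ ⊤ ∧ x = z + c - B - D ∧
      r = (τ₀ z).toReal / (1 + δ) + K * ‖c‖ - (ψ₁ B).re - (ψ₂ D).re} with hPS
  -- the key lower bound coming from the master inequality
  have key : ∀ x : A, ∀ r ∈ PS x, -(K * ‖x‖) ≤ r := by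
    rintro x r ⟨z, B, D, c, hz, hB, hD, hfz, hxe, hre⟩
    set w : A := c - x with hw
    have hwBD : B + D = z + w := by rw [hw, hxe]; abel
    have hbound : ∀ t : ℝ, ‖w‖ < t →
        (ψ₁ B).re + (ψ₂ D).re ≤ (τ₀ z).toReal / (1 + δ) + (1 + γ⁻¹) * (t * Φ) := by
      intro t hlt
      have ht : 0 < t := lt_of_le_of_lt (norm_nonneg w) hlt
      have hwsa : IsSelfAdjoint w := by
        have hw2 : w = B + D - z := by rw [hwBD]; abel
        rw [hw2]
        exact ((IsSelfAdjoint.of_nonneg hB).add (IsSelfAdjoint.of_nonneg hD)).sub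
          (IsSelfAdjoint.of_nonneg hz)
      have hw1 : w ≤ t • (1 : A) := by
        refine le_trans hwsa.le_algebraMap_norm_self ?_
        rw [Algebra.algebraMap_eq_smul_one]
        have h0 : (0:A) ≤ (t - ‖w‖) • (1 : A) := smul_nonneg (by linarith) zero_le_one
        have heq : (t - ‖w‖) • (1:A) = t • (1:A) - ‖w‖ • (1:A) := sub_smul t ‖w‖ 1
        rw [heq] at h0
        exact sub_nonneg.mp h0
      have hBDle : B + D ≤ z + t • (1 : A) := by
        rw [hwBD]
        exact add_le_add le_rfl hw1
      have hm := master hτ hψ₁ hψ₂ hε hd₁ hd₂ hγ hz hB hD hfz ht hBDle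
      calc (ψ₁ B).re + (ψ₂ D).re
          ≤ (1 + γ) / (1 + ε) * (τ₀ z).toReal + (1 + γ⁻¹) * (t * Φ) := by
            rw [hΦdef]; exact hm
        _ = (τ₀ z).toReal / (1 + δ) + (1 + γ⁻¹) * (t * Φ) := by
            rw [hγδ]; ring
    have hbound' : (ψ₁ B).re + (ψ₂ D).re ≤ (τ₀ z).toReal / (1 + δ) + K * ‖w‖ := by
      refine le_of_forall_pos_le_add' fun η hη => ?_
      have hKpos : (0:ℝ) < K + 1 := by linarith
      have hlt : ‖w‖ < ‖w‖ + η / (K + 1) := by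
        have : 0 < η / (K + 1) := by positivity
        linarith
      refine (hbound _ hlt).trans ?_
      have hKt : (1 + γ⁻¹) * ((‖w‖ + η / (K + 1)) * Φ) = K * ‖w‖ + K * (η / (K + 1)) := by
        rw [hKdef]; ring
      rw [hKt]
      have : K * (η / (K + 1)) ≤ η := by
        rw [div_eq_mul_inv, ← mul_assoc]
        have h1 : K * η * (K + 1)⁻¹ ≤ (K + 1) * η * (K + 1)⁻¹ := by
          have := mul_le_mul_of_nonneg_right
            (mul_le_mul_of_nonneg_right (le_add_of_nonneg_right zero_le_one : K ≤ K + 1) hη.le)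
            (inv_nonneg.mpr hKpos.le)
          exact this
        have h2 : (K + 1) * η * (K + 1)⁻¹ = η := by field_simp
        linarith
      linarith
    have hwx : ‖w‖ ≤ ‖c‖ + ‖x‖ := by rw [hw]; exact norm_sub_le c x
    have hKw : K * ‖w‖ ≤ K * ‖c‖ + K * ‖x‖ := by
      have := mul_le_mul_of_nonneg_left hwx hK
      linarith [this]
    have hT0 : 0 ≤ (τ₀ z).toReal / (1 + δ) := by positivity
    rw [hre]
    linarith
  have hPSne : ∀ x : A, K * ‖x‖ ∈ PS x := by
    intro x
    refine ⟨0, 0, 0, x, le_rfl, le_rfl, le_rfl, by simp [hτ0], by abel, ?_⟩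
    simp [hτ0]
  have hbdd : ∀ x : A, BddBelow (PS x) := fun x => ⟨-(K * ‖x‖), fun r hr => key x r hr⟩
  set pf : A → ℝ := fun x => sInf (PS x) with hpf
  have hpf_le : ∀ x : A, ∀ r ∈ PS x, pf x ≤ r := fun x r hr => csInf_le (hbdd x) hr
  have hpf_ge : ∀ x : A, -(K * ‖x‖) ≤ pf x := fun x =>
    le_csInf ⟨_, hPSne x⟩ (key x)
  -- subadditivity
  have hsub : ∀ x y : A, pf (x + y) ≤ pf x + pf y := by
    intro x y
    have h1 : ∀ r₁ ∈ PS x, ∀ r₂ ∈ PS y, pf (x + y) ≤ r₁ + r₂ := by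
      rintro r₁ ⟨z₁, B₁, D₁, c₁, hz₁, hB₁, hD₁, hf₁, he₁, hr₁⟩
        r₂ ⟨z₂, B₂, D₂, c₂, hz₂, hB₂, hD₂, hf₂, he₂, hr₂⟩
      have hfz : τ₀ (z₁ + z₂) ≠ ⊤ := by
        rw [hτ.1 _ _ hz₁ hz₂]
        exact ENNReal.add_ne_top.mpr ⟨hf₁, hf₂⟩
      have hmem : ((τ₀ (z₁ + z₂)).toReal / (1 + δ) + K * ‖c₁ + c₂‖
          - (ψ₁ (B₁ + B₂)).re - (ψ₂ (D₁ + D₂)).re) ∈ PS (x + y) :=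
        ⟨z₁ + z₂, B₁ + B₂, D₁ + D₂, c₁ + c₂, add_nonneg hz₁ hz₂, add_nonneg hB₁ hB₂,
          add_nonneg hD₁ hD₂, hfz, by rw [he₁, he₂]; abel, rfl⟩
      refine (hpf_le _ _ hmem).trans ?_
      have hT : (τ₀ (z₁ + z₂)).toReal = (τ₀ z₁).toReal + (τ₀ z₂).toReal := by
        rw [hτ.1 _ _ hz₁ hz₂, ENNReal.toReal_add hf₁ hf₂]
      have hcc : K * ‖c₁ + c₂‖ ≤ K * ‖c₁‖ + K * ‖c₂‖ := by
        have := mul_le_mul_of_nonneg_left (norm_add_le c₁ c₂) hK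
        linarith [this]
      rw [hr₁, hr₂, hT, rP_add, rP_add]
      have hdiv : ((τ₀ z₁).toReal + (τ₀ z₂).toReal) / (1 + δ)
          = (τ₀ z₁).toReal / (1 + δ) + (τ₀ z₂).toReal / (1 + δ) := by ring
      rw [hdiv]
      linarith
    have h2 : ∀ r₁ ∈ PS x, pf (x + y) - r₁ ≤ pf y := fun r₁ hr₁ =>
      le_csInf ⟨_, hPSne y⟩ fun r₂ hr₂ => by linarith [h1 r₁ hr₁ r₂ hr₂]
    have h3 := le_csInf ⟨_, hPSne x⟩ (fun r₁ hr₁ => by linarith [h2 r₁ hr₁] :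
      ∀ r₁ ∈ PS x, pf (x + y) - pf y ≤ r₁)
    linarith
  -- positive homogeneity
  have hmap : ∀ (l : ℝ), 0 < l → ∀ x : A, ∀ r ∈ PS x, l * r ∈ PS (l • x) := by
    rintro l hl x r ⟨z, B, D, c, hz, hB, hD, hfz, he, hr⟩
    have hlz : τ₀ (l • z) = ENNReal.ofReal l * τ₀ z := by
      rw [show l • z = (l : ℂ) • z from by
        rw [show ((l : ℝ) : ℂ) = algebraMap ℝ ℂ l from rfl, algebraMap_smul]]
      exact hτ.2 l hl z hz
    refine ⟨l • z, l • B, l • D, l • c, smul_nonneg hl.le hz, smul_nonneg hl.le hB,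
      smul_nonneg hl.le hD, ?_, ?_, ?_⟩
    · rw [hlz]
      exact ENNReal.mul_ne_top ENNReal.ofReal_ne_top hfz
    · rw [he]; simp only [smul_add, smul_sub]
    · rw [hr, rP_rsmul, rP_rsmul, hlz, ENNReal.toReal_mul, ENNReal.toReal_ofReal hl.le,
        norm_smul, Real.norm_eq_abs, abs_of_pos hl]
      ring
  have hsmul_le : ∀ (l : ℝ), 0 < l → ∀ x : A, pf (l • x) ≤ l * pf x := by
    intro l hl x
    have h2 : ∀ r ∈ PS x, pf (l • x) / l ≤ r := fun r hr => by
      rw [div_le_iff₀ hl, mul_comm]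
      exact hpf_le _ _ (hmap l hl x r hr)
    have h3 := le_csInf ⟨_, hPSne x⟩ h2
    calc pf (l • x) = pf (l • x) / l * l := by field_simp
      _ ≤ pf x * l := mul_le_mul_of_nonneg_right h3 hl.le
      _ = l * pf x := mul_comm _ _
  have hsmul_eq : ∀ (l : ℝ), 0 < l → ∀ x : A, pf (l • x) = l * pf x := by
    intro l hl x
    refine le_antisymm (hsmul_le l hl x) ?_
    have h4 := hsmul_le l⁻¹ (inv_pos.2 hl) (l • x)
    rw [smul_smul, inv_mul_cancel₀ hl.ne', one_smul] at h4
    calc l * pf x ≤ l * (l⁻¹ * pf (l • x)) := mul_le_mul_of_nonneg_left h4 hl.le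
      _ = pf (l • x) := by field_simp
  -- Hahn-Banach
  have hp0 : 0 ≤ pf 0 := by
    have := hpf_ge 0
    simpa using this
  obtain ⟨g, -, hg⟩ := exists_extension_of_le_sublinear (⟨⊥, 0⟩ : A →ₗ.[ℝ] ℝ) pf
    (fun c hc x => hsmul_eq c hc x) hsub
    (fun x => by
      have hx0 : (x : A) = 0 := (Submodule.mem_bot ℝ).mp x.2
      show (0 : (⊥ : Submodule ℝ A) →ₗ[ℝ] ℝ) x ≤ pf x
      rw [LinearMap.zero_apply, hx0]
      exact hp0)
  -- properties of g
  have hgnorm : ∀ x : A, |g x| ≤ K * ‖x‖ := by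
    intro x
    rw [abs_le]
    constructor
    · have h1 := hg (-x)
      have h2 : pf (-x) ≤ K * ‖-x‖ := hpf_le _ _ (hPSne (-x))
      rw [map_neg, norm_neg] at *
      linarith
    · exact (hg x).trans (hpf_le _ _ (hPSne x))
  have hg_up : ∀ a : A, 0 ≤ a → τ₀ a ≠ ⊤ → (1 + δ) * g a ≤ (τ₀ a).toReal := by
    intro a ha hfa
    have hmem : ((τ₀ a).toReal / (1 + δ) + K * ‖(0:A)‖ - (ψ₁ 0).re - (ψ₂ 0).re) ∈ PS a :=
      ⟨a, 0, 0, 0, ha, le_rfl, le_rfl, hfa, by abel, rfl⟩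
    have h1 := (hg a).trans (hpf_le _ _ hmem)
    simp only [norm_zero, mul_zero, map_zero, Complex.zero_re, sub_zero, add_zero] at h1
    rw [mul_comm]
    exact (le_div_iff₀ hδ1).mp h1
  have hg_ge₁ : ∀ b : A, 0 ≤ b → (ψ₁ b).re ≤ g b := by
    intro b hb
    have hmem : ((τ₀ (0:A)).toReal / (1 + δ) + K * ‖(0:A)‖ - (ψ₁ b).re - (ψ₂ 0).re)
        ∈ PS (-b) := ⟨0, b, 0, 0, le_rfl, hb, le_rfl, by simp [hτ0], by abel, rfl⟩
    have h1 := (hg (-b)).trans (hpf_le _ _ hmem)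
    rw [map_neg] at h1
    simp only [hτ0, ENNReal.toReal_zero, zero_div, norm_zero, mul_zero, map_zero,
      Complex.zero_re, sub_zero, zero_add, zero_sub] at h1
    linarith
  have hg_ge₂ : ∀ b : A, 0 ≤ b → (ψ₂ b).re ≤ g b := by
    intro b hb
    have hmem : ((τ₀ (0:A)).toReal / (1 + δ) + K * ‖(0:A)‖ - (ψ₁ 0).re - (ψ₂ b).re)
        ∈ PS (-b) := ⟨0, 0, b, 0, le_rfl, le_rfl, hb, by simp [hτ0], by abel, rfl⟩
    have h1 := (hg (-b)).trans (hpf_le _ _ hmem)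
    rw [map_neg] at h1
    simp only [hτ0, ENNReal.toReal_zero, zero_div, norm_zero, mul_zero, map_zero,
      Complex.zero_re, sub_zero, zero_add, zero_sub] at h1
    linarith
  -- complexify
  obtain ⟨ψ, hψeq⟩ := cplx_exists g hK hgnorm
  have hψre : ∀ a : A, 0 ≤ a → (ψ a).re = g a := by
    intro a ha
    rw [hψeq a (IsSelfAdjoint.of_nonneg ha).star_eq, Complex.ofReal_re]
  have hψim : ∀ a : A, 0 ≤ a → (ψ a).im = 0 := by
    intro a ha
    rw [hψeq a (IsSelfAdjoint.of_nonneg ha).star_eq, Complex.ofReal_im]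
  refine ⟨ψ, ?_, ?_, ?_, ?_⟩
  · intro a ha
    refine ⟨?_, hψim a ha⟩
    rw [hψre a ha]
    exact le_trans (hψ₁ a ha).1 (hg_ge₁ a ha)
  · intro a ha
    by_cases hfa : τ₀ a = ⊤
    · rw [hfa]; exact le_top
    · rw [hψre a ha]
      rw [ENNReal.ofReal_le_iff_le_toReal hfa]
      exact hg_up a ha hfa
  · intro a ha
    rw [hψre a ha]
    exact hg_ge₁ a ha
  · intro a ha
    rw [hψre a ha]
    exact hg_ge₂ a ha

lemma weight_top_or_zero {τ₀ : A → ℝ≥0∞} (hτ : IsWeight τ₀) :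
    τ₀ 0 = 0 ∨ ∀ a : A, 0 ≤ a → τ₀ a = ⊤ := by
  have h := hτ.1 0 0 le_rfl le_rfl
  rw [add_zero] at h
  by_cases h0 : τ₀ 0 = ⊤
  · right
    intro a ha
    have h2 := hτ.1 a 0 ha le_rfl
    rw [add_zero] at h2
    rw [h2, h0]
    simp
  · left
    have h2 : τ₀ 0 + 0 = τ₀ 0 + τ₀ 0 := by rw [add_zero]; exact h
    exact ((ENNReal.add_right_inj h0).mp h2).symm

lemma directed {τ₀ : A → ℝ≥0∞} (hτ : IsWeight τ₀) :
    ∀ ψ₁ ∈ FSet τ₀, ∀ ψ₂ ∈ FSet τ₀, ∃ ψ ∈ FSet τ₀,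
      (∀ a : A, 0 ≤ a → (ψ₁ a).re ≤ (ψ a).re) ∧
      (∀ a : A, 0 ≤ a → (ψ₂ a).re ≤ (ψ a).re) := by
  rintro ψ₁ ⟨hpos₁, ε₁, hε₁, hdom₁⟩ ψ₂ ⟨hpos₂, ε₂, hε₂, hdom₂⟩
  rcases weight_top_or_zero hτ with hτ0 | htop
  · set ε := min ε₁ ε₂ with hεdef
    have hε : 0 < ε := lt_min hε₁ hε₂
    have hd₁ : ∀ x : A, 0 ≤ x → ENNReal.ofReal ((1 + ε) * (ψ₁ x).re) ≤ τ₀ x := by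
      intro x hx
      refine le_trans (ENNReal.ofReal_le_ofReal ?_) (hdom₁ x hx)
      refine mul_le_mul_of_nonneg_right ?_ (hpos₁ x hx).1
      have := min_le_left ε₁ ε₂
      rw [hεdef]
      linarith
    have hd₂ : ∀ x : A, 0 ≤ x → ENNReal.ofReal ((1 + ε) * (ψ₂ x).re) ≤ τ₀ x := by
      intro x hx
      refine le_trans (ENNReal.ofReal_le_ofReal ?_) (hdom₂ x hx)
      refine mul_le_mul_of_nonneg_right ?_ (hpos₂ x hx).1
      have := min_le_right ε₁ ε₂
      rw [hεdef]
      linarith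
    obtain ⟨ψ, hp, hdom, hle₁, hle₂⟩ := directed_main hτ hτ0 hpos₁ hpos₂ hε hd₁ hd₂
    exact ⟨ψ, ⟨hp, ε / 2, by linarith, hdom⟩, hle₁, hle₂⟩
  · refine ⟨ψ₁ + ψ₂, ⟨?_, 1, one_pos, ?_⟩, ?_, ?_⟩
    · intro a ha
      rw [ContinuousLinearMap.add_apply, Complex.add_re, Complex.add_im]
      exact ⟨add_nonneg (hpos₁ a ha).1 (hpos₂ a ha).1,
        by rw [(hpos₁ a ha).2, (hpos₂ a ha).2, add_zero]⟩
    · intro a ha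
      rw [htop a ha]
      exact le_top
    · intro a ha
      rw [ContinuousLinearMap.add_apply, Complex.add_re]
      exact le_add_of_nonneg_right (hpos₂ a ha).1
    · intro a ha
      rw [ContinuousLinearMap.add_apply, Complex.add_re]
      exact le_add_of_nonneg_left (hpos₁ a ha).1

lemma regWeight_def (τ₀ : A → ℝ≥0∞) (x : A) :
    regWeight τ₀ x = ⨆ ψ ∈ {ψ : A →L[ℂ] ℂ | IsPosFunctional ψ ∧ Dominated ψ τ₀},
      ENNReal.ofReal ((ψ x).re) := rfl

lemma le_regWeight {τ₀ : A → ℝ≥0∞} {ψ : A →L[ℂ] ℂ}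
    (hψ : ψ ∈ {ψ : A →L[ℂ] ℂ | IsPosFunctional ψ ∧ Dominated ψ τ₀}) (x : A) :
    ENNReal.ofReal ((ψ x).re) ≤ regWeight τ₀ x := by
  rw [regWeight_def]
  exact le_biSup (fun ψ : A →L[ℂ] ℂ => ENNReal.ofReal ((ψ x).re)) hψ

lemma zero_mem_dom (τ₀ : A → ℝ≥0∞) :
    (0 : A →L[ℂ] ℂ) ∈ {ψ : A →L[ℂ] ℂ | IsPosFunctional ψ ∧ Dominated ψ τ₀} := by
  constructor
  · intro a ha
    simp
  · intro a ha
    simp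

lemma FSet_subset_dom {τ₀ : A → ℝ≥0∞} {ψ : A →L[ℂ] ℂ} (h : ψ ∈ FSet τ₀) :
    IsPosFunctional ψ ∧ Dominated ψ τ₀ := by
  obtain ⟨hp, ε0, hε0, hd⟩ := h
  refine ⟨hp, fun x hx => le_trans (ENNReal.ofReal_le_ofReal ?_) (hd x hx)⟩
  nlinarith [(hp x hx).1]

/-! ### regWeight is a weight -/

lemma regWeight_add {τ₀ : A → ℝ≥0∞} (hτ : IsWeight τ₀) {a b : A} (ha : 0 ≤ a) (hb : 0 ≤ b) :
    regWeight τ₀ (a + b) = regWeight τ₀ a + regWeight τ₀ b := by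
  refine le_antisymm ?_ ?_
  · rw [regWeight_def]
    refine iSup₂_le fun ψ hψ => ?_
    have h1 : (ψ (a + b)).re = (ψ a).re + (ψ b).re := rP_add ψ a b
    rw [h1, ENNReal.ofReal_add (hψ.1 a ha).1 (hψ.1 b hb).1]
    exact add_le_add (le_regWeight hψ a) (le_regWeight hψ b)
  · rw [regWeight_def τ₀ a, regWeight_def τ₀ b]
    refine ENNReal.biSup_add_biSup_le ⟨0, zero_mem_dom τ₀⟩ ⟨0, zero_mem_dom τ₀⟩
      fun ψ₁ h₁ ψ₂ h₂ => ?_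
    refine ENNReal.le_of_forall_lt_one_mul_le fun ρ hρ => ?_
    by_cases hρ0 : ρ = 0
    · simp [hρ0]
    have hρt : ρ ≠ ⊤ := (hρ.trans ENNReal.one_lt_top).ne
    set s : ℝ := ρ.toReal with hs
    have hs0 : 0 < s := ENNReal.toReal_pos hρ0 hρt
    have hs1 : s < 1 := by
      have h2 := (ENNReal.toReal_lt_toReal hρt ENNReal.one_ne_top).mpr hρ
      simpa using h2
    set ε' : ℝ := s⁻¹ - 1 with hε'
    have hε'' : 0 < ε' := by
      rw [hε']
      have : 1 < s⁻¹ := (one_lt_inv₀ hs0).mpr hs1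
      linarith
    have hsmulre : ∀ (ψ : A →L[ℂ] ℂ) (x : A), (((s : ℂ) • ψ) x).re = s * (ψ x).re := by
      intro ψ x
      rw [ContinuousLinearMap.smul_apply, smul_eq_mul, Complex.re_ofReal_mul]
    have hmemF : ∀ (ψ : A →L[ℂ] ℂ), IsPosFunctional ψ → Dominated ψ τ₀ →
        ((s : ℂ) • ψ) ∈ FSet τ₀ := by
      intro ψ hp hdm
      refine ⟨?_, ε', hε'', ?_⟩
      · intro x hx
        constructor
        · rw [hsmulre]
          exact mul_nonneg hs0.le (hp x hx).1
        · rw [ContinuousLinearMap.smul_apply, smul_eq_mul, Complex.im_ofReal_mul,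
            (hp x hx).2, mul_zero]
      · intro x hx
        rw [hsmulre]
        have heq : (1 + ε') * (s * (ψ x).re) = (ψ x).re := by
          rw [hε']
          field_simp
          ring
        rw [heq]
        exact hdm x hx
    obtain ⟨ψ, hψF, hle₁, hle₂⟩ := directed hτ _ (hmemF ψ₁ h₁.1 h₁.2) _ (hmemF ψ₂ h₂.1 h₂.2)
    obtain ⟨hψpos, hψdom⟩ := FSet_subset_dom hψF
    have hl₁ : s * (ψ₁ a).re ≤ (ψ a).re := by rw [← hsmulre]; exact hle₁ a ha
    have hl₂ : s * (ψ₂ b).re ≤ (ψ b).re := by rw [← hsmulre]; exact hle₂ b hb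
    calc ρ * (ENNReal.ofReal (ψ₁ a).re + ENNReal.ofReal (ψ₂ b).re)
        = ENNReal.ofReal (s * (ψ₁ a).re) + ENNReal.ofReal (s * (ψ₂ b).re) := by
          rw [ENNReal.ofReal_mul hs0.le, ENNReal.ofReal_mul hs0.le, mul_add, hs,
            ENNReal.ofReal_toReal hρt]
      _ ≤ ENNReal.ofReal ((ψ a).re) + ENNReal.ofReal ((ψ b).re) :=
          add_le_add (ENNReal.ofReal_le_ofReal hl₁) (ENNReal.ofReal_le_ofReal hl₂)
      _ = ENNReal.ofReal ((ψ (a + b)).re) := by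
          rw [rP_add, ENNReal.ofReal_add (hψpos a ha).1 (hψpos b hb).1]
      _ ≤ regWeight τ₀ (a + b) := le_regWeight ⟨hψpos, hψdom⟩ (a + b)

lemma regWeight_smul (τ₀ : A → ℝ≥0∞) {l : ℝ} (hl : 0 < l) (a : A) :
    regWeight τ₀ ((l : ℂ) • a) = ENNReal.ofReal l * regWeight τ₀ a := by
  rw [regWeight_def, regWeight_def]
  have h1 : ∀ ψ : A →L[ℂ] ℂ, (ψ ((l : ℂ) • a)).re = l * (ψ a).re := fun ψ => by
    rw [map_smul, smul_eq_mul, Complex.re_ofReal_mul]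
  calc (⨆ ψ ∈ {ψ : A →L[ℂ] ℂ | IsPosFunctional ψ ∧ Dominated ψ τ₀},
        ENNReal.ofReal ((ψ ((l : ℂ) • a)).re))
      = ⨆ ψ ∈ {ψ : A →L[ℂ] ℂ | IsPosFunctional ψ ∧ Dominated ψ τ₀},
        ENNReal.ofReal l * ENNReal.ofReal ((ψ a).re) := by
        refine iSup_congr fun ψ => iSup_congr fun _ => ?_
        rw [h1, ENNReal.ofReal_mul hl.le]
    _ = ENNReal.ofReal l * ⨆ ψ ∈ {ψ : A →L[ℂ] ℂ | IsPosFunctional ψ ∧ Dominated ψ τ₀},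
        ENNReal.ofReal ((ψ a).re) := by
        simp_rw [ENNReal.mul_iSup]

lemma regWeight_lsc (τ₀ : A → ℝ≥0∞) (a : A) (s : ℕ → A)
    (hts : Filter.Tendsto s Filter.atTop (nhds a)) :
    regWeight τ₀ a ≤ Filter.liminf (fun n => regWeight τ₀ (s n)) Filter.atTop := by
  rw [regWeight_def]
  refine iSup₂_le fun ψ hψ => ?_
  have htend : Filter.Tendsto (fun n => ENNReal.ofReal ((ψ (s n)).re)) Filter.atTop
      (nhds (ENNReal.ofReal ((ψ a).re))) := by
    refine (ENNReal.continuous_ofReal.tendsto _).comp ?_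
    refine (Complex.continuous_re.tendsto _).comp ?_
    exact (ψ.continuous.tendsto a).comp hts
  rw [← htend.liminf_eq]
  refine Filter.liminf_le_liminf (Filter.Eventually.of_forall fun n => ?_)
  exact le_regWeight hψ (s n)

end QVaux

theorem stmt_9 (τ₀ : A → ℝ≥0∞) (hτ₀ : IsWeight τ₀) :
    (∀ ψ₁ ∈ FSet τ₀, ∀ ψ₂ ∈ FSet τ₀, ∃ ψ ∈ FSet τ₀,
        (∀ a : A, 0 ≤ a → (ψ₁ a).re ≤ (ψ a).re) ∧
        (∀ a : A, 0 ≤ a → (ψ₂ a).re ≤ (ψ a).re)) ∧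
    IsWeight (regWeight τ₀) ∧
    (∀ (a : A) (s : ℕ → A), (∀ n, 0 ≤ s n) → 0 ≤ a →
        Filter.Tendsto s Filter.atTop (nhds a) →
        regWeight τ₀ a ≤ Filter.liminf (fun n => regWeight τ₀ (s n)) Filter.atTop) := by
  refine ⟨QVaux.directed hτ₀, ⟨?_, ?_⟩, ?_⟩
  · intro a b ha hb
    exact QVaux.regWeight_add hτ₀ ha hb
  · intro l hl a _
    exact QVaux.regWeight_smul τ₀ hl a
  · intro a s _ _ hts
    exact QVaux.regWeight_lsc τ₀ a s hts
end

section
/- Let A be a unital C*-algebra with dense *-subalgebra A₀, and τ₀ a weight on A₊ that is ε-invariant for δ-unitaries in A₀: for every ε ∈ (0,1) there is δ > 0 such that every δ-unitary U ∈ A₀ satisfies (1−ε)τ₀(a) ≤ τ₀(UaU*) ≤ (1+ε)τ₀(a) for all a ∈ A₊. Then the semicontinuous regularization τ(a) = sup{ψ(a) : ψ ∈ A*₊, ψ ≤ τ₀} satisfies the same ε-invariance property for δ-unitaries in A₀. -/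
open scoped ENNReal

set_option linter.unusedSectionVars false

variable {A : Type*} [NormedRing A] [StarRing A] [CStarRing A]
  [NormedAlgebra ℂ A] [StarModule ℂ A] [CompleteSpace A]
  [PartialOrder A] [StarOrderedRing A]

/-- A `δ`-unitary: `‖U*U − 1‖ < δ` and `‖UU* − 1‖ < δ`. -/
def IsDeltaUnitary (δ : ℝ) (U : A) : Prop :=
  ‖star U * U - 1‖ < δ ∧ ‖U * star U - 1‖ < δ

/-- `τ` is `ε`-invariant for `δ`-unitaries in the subalgebra `A₀`. -/
def EpsInvariant (A₀ : StarSubalgebra ℂ A) (τ : A → ℝ≥0∞) : Prop :=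
  ∀ ε : ℝ, 0 < ε → ε < 1 → ∃ δ : ℝ, 0 < δ ∧
    ∀ U ∈ A₀, IsDeltaUnitary δ U → ∀ a : A, 0 ≤ a →
      ENNReal.ofReal (1 - ε) * τ a ≤ τ (U * a * star U) ∧
      τ (U * a * star U) ≤ ENNReal.ofReal (1 + ε) * τ a

noncomputable def conjCLM (u v : A) : A →L[ℂ] A :=
  (ContinuousLinearMap.mul ℂ A u).comp ((ContinuousLinearMap.mul ℂ A).flip v)

lemma conjCLM_apply (u v x : A) : conjCLM u v x = u * x * v := by
  simp [conjCLM, mul_assoc]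

lemma isUnit_of_close (U : A) (h1 : ‖star U * U - 1‖ < 1) (h2 : ‖U * star U - 1‖ < 1) :
    IsUnit U := by
  have hu1 : IsUnit (star U * U) := by
    have h : ‖1 - star U * U‖ < 1 := by rwa [norm_sub_rev] at h1
    simpa [sub_sub_cancel] using (Units.oneSub _ h).isUnit
  have hu2 : IsUnit (U * star U) := by
    have h : ‖1 - U * star U‖ < 1 := by rwa [norm_sub_rev] at h2
    simpa [sub_sub_cancel] using (Units.oneSub _ h).isUnit
  obtain ⟨u1, hu1e⟩ := hu1
  obtain ⟨u2, hu2e⟩ := hu2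
  have hvU : ((↑u1⁻¹ : A) * star U) * U = 1 := by
    rw [mul_assoc, ← hu1e]; exact u1.inv_mul
  have hUw : U * (star U * (↑u2⁻¹ : A)) = 1 := by
    rw [← mul_assoc, ← hu2e]; exact u2.mul_inv
  have hvw : ((↑u1⁻¹ : A) * star U) = star U * (↑u2⁻¹ : A) := by
    calc ((↑u1⁻¹ : A) * star U) = ((↑u1⁻¹ : A) * star U) * (U * (star U * (↑u2⁻¹ : A))) := by
          rw [hUw, mul_one]
    _ = (((↑u1⁻¹ : A) * star U) * U) * (star U * (↑u2⁻¹ : A)) := by simp only [mul_assoc]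
    _ = star U * (↑u2⁻¹ : A) := by rw [hvU, one_mul]
  exact ⟨⟨U, (↑u1⁻¹ : A) * star U, by rw [hvw]; exact hUw, hvU⟩, rfl⟩

theorem stmt_10 (A₀ : StarSubalgebra ℂ A) (hdense : Dense (A₀ : Set A))
    (τ₀ : A → ℝ≥0∞) (hτ₀ : IsWeight τ₀) (hinv : EpsInvariant A₀ τ₀) :
    EpsInvariant A₀ (regWeight τ₀) := by
  intro ε hε hε1
  obtain ⟨δ, hδ, hU⟩ := hinv ε hε hε1
  refine ⟨min δ 1, lt_min hδ one_pos, ?_⟩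
  intro U hUA hUδ a ha
  have hUδ' : IsDeltaUnitary δ U :=
    ⟨hUδ.1.trans_le (min_le_left _ _), hUδ.2.trans_le (min_le_left _ _)⟩
  have hu : IsUnit U :=
    isUnit_of_close U (hUδ.1.trans_le (min_le_right _ _)) (hUδ.2.trans_le (min_le_right _ _))
  obtain ⟨u, hu_eq⟩ := hu
  set V : A := (↑u⁻¹ : A) with hV
  have hVU : V * U = 1 := by rw [hV, ← hu_eq]; exact u.inv_mul
  have hUV : U * V = 1 := by rw [hV, ← hu_eq]; exact u.mul_inv
  have hsVU : star V * star U = 1 := by rw [← star_mul, hUV, star_one]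
  have hsUV : star U * star V = 1 := by rw [← star_mul, hVU, star_one]
  have key1 : ∀ x : A, U * (V * x * star V) * star U = x := by
    intro x
    calc U * (V * x * star V) * star U = (U * V) * (x * (star V * star U)) := by
          simp only [mul_assoc]
    _ = x := by rw [hUV, hsVU, one_mul, mul_one]
  have key2 : ∀ x : A, V * (U * x * star U) * star V = x := by
    intro x
    calc V * (U * x * star U) * star V = (V * U) * (x * (star U * star V)) := by
          simp only [mul_assoc]
    _ = x := by rw [hVU, hsUV, one_mul, mul_one]
  have h1ε : (0:ℝ) < 1 + ε := by linarith
  have h1ε' : (0:ℝ) ≤ 1 - ε := by linarith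
  set S : Set (A →L[ℂ] ℂ) := {ψ : A →L[ℂ] ℂ | IsPosFunctional ψ ∧ Dominated ψ τ₀} with hS
  constructor
  · -- lower bound : ofReal (1-ε) * regWeight τ₀ a ≤ regWeight τ₀ (U * a * star U)
    rw [regWeight]
    simp_rw [ENNReal.mul_iSup]
    refine iSup₂_le fun ψ hψ => ?_
    set χ : A →L[ℂ] ℂ := (((1 - ε : ℝ) : ℂ)) • ψ.comp (conjCLM V (star V)) with hχ
    have hχ_apply : ∀ x : A, χ x = ((1 - ε : ℝ) : ℂ) * ψ (V * x * star V) := by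
      intro x
      simp [hχ, conjCLM_apply]
    have hχ_re : ∀ x : A, (χ x).re = (1 - ε) * (ψ (V * x * star V)).re := by
      intro x; rw [hχ_apply, Complex.re_ofReal_mul]
    have hχS : χ ∈ S := by
      constructor
      · intro x hx
        have hx' : 0 ≤ V * x * star V := star_right_conjugate_nonneg hx V
        obtain ⟨hre, him⟩ := hψ.1 _ hx'
        constructor
        · rw [hχ_re]; positivity
        · rw [hχ_apply, Complex.im_ofReal_mul, him, mul_zero]
      · intro x hx
        have hx' : 0 ≤ V * x * star V := star_right_conjugate_nonneg hx V
        have d1 : ENNReal.ofReal (ψ (V * x * star V)).re ≤ τ₀ (V * x * star V) := hψ.2 _ hx'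
        have d2 : ENNReal.ofReal (1 - ε) * τ₀ (V * x * star V) ≤ τ₀ x := by
          have := (hU U hUA hUδ' (V * x * star V) hx').1
          rwa [key1] at this
        calc ENNReal.ofReal (χ x).re
            = ENNReal.ofReal (1 - ε) * ENNReal.ofReal (ψ (V * x * star V)).re := by
              rw [hχ_re, ENNReal.ofReal_mul h1ε']
        _ ≤ ENNReal.ofReal (1 - ε) * τ₀ (V * x * star V) := mul_le_mul_right d1 _
        _ ≤ τ₀ x := d2
    have hχa : (χ (U * a * star U)).re = (1 - ε) * (ψ a).re := by
      rw [hχ_re, key2]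
    have hle : ENNReal.ofReal (χ (U * a * star U)).re ≤ regWeight τ₀ (U * a * star U) :=
      le_iSup₂ (f := fun ψ (_ : ψ ∈ S) => ENNReal.ofReal (ψ (U * a * star U)).re) χ hχS
    calc ENNReal.ofReal (1 - ε) * ENNReal.ofReal (ψ a).re
        = ENNReal.ofReal (χ (U * a * star U)).re := by
          rw [hχa, ENNReal.ofReal_mul h1ε']
    _ ≤ regWeight τ₀ (U * a * star U) := hle
  · -- upper bound
    rw [regWeight]
    refine iSup₂_le fun ψ hψ => ?_
    set φ : A →L[ℂ] ℂ := ((((1 + ε)⁻¹ : ℝ) : ℂ)) • ψ.comp (conjCLM U (star U)) with hφ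
    have hφ_apply : ∀ x : A, φ x = (((1 + ε)⁻¹ : ℝ) : ℂ) * ψ (U * x * star U) := by
      intro x; simp [hφ, conjCLM_apply]
    have hφ_re : ∀ x : A, (φ x).re = (1 + ε)⁻¹ * (ψ (U * x * star U)).re := by
      intro x; rw [hφ_apply, Complex.re_ofReal_mul]
    have hφS : φ ∈ S := by
      constructor
      · intro x hx
        have hx' : 0 ≤ U * x * star U := star_right_conjugate_nonneg hx U
        obtain ⟨hre, him⟩ := hψ.1 _ hx'
        constructor
        · rw [hφ_re]; positivity
        · rw [hφ_apply, Complex.im_ofReal_mul, him, mul_zero]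
      · intro x hx
        have hx' : 0 ≤ U * x * star U := star_right_conjugate_nonneg hx U
        have d1 : ENNReal.ofReal (ψ (U * x * star U)).re ≤ τ₀ (U * x * star U) := hψ.2 _ hx'
        have d2 : τ₀ (U * x * star U) ≤ ENNReal.ofReal (1 + ε) * τ₀ x :=
          (hU U hUA hUδ' x hx).2
        calc ENNReal.ofReal (φ x).re
            = ENNReal.ofReal ((1 + ε)⁻¹) * ENNReal.ofReal (ψ (U * x * star U)).re := by
              rw [hφ_re, ENNReal.ofReal_mul (by positivity)]
        _ ≤ ENNReal.ofReal ((1 + ε)⁻¹) * (ENNReal.ofReal (1 + ε) * τ₀ x) :=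
              mul_le_mul_right (d1.trans d2) _
        _ = (ENNReal.ofReal ((1 + ε)⁻¹) * ENNReal.ofReal (1 + ε)) * τ₀ x := (mul_assoc _ _ _).symm
        _ = τ₀ x := by
              rw [← ENNReal.ofReal_mul (by positivity), inv_mul_cancel₀ (ne_of_gt h1ε),
                ENNReal.ofReal_one, one_mul]
    have hle : ENNReal.ofReal (φ a).re ≤ regWeight τ₀ a :=
      le_iSup₂ (f := fun ψ (_ : ψ ∈ S) => ENNReal.ofReal (ψ a).re) φ hφS
    have heq : ENNReal.ofReal (ψ (U * a * star U)).re
        = ENNReal.ofReal (1 + ε) * ENNReal.ofReal (φ a).re := by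
      rw [hφ_re, ENNReal.ofReal_mul (by positivity), ← mul_assoc,
        ← ENNReal.ofReal_mul (le_of_lt h1ε), mul_inv_cancel₀ (ne_of_gt h1ε),
        ENNReal.ofReal_one, one_mul]
    rw [heq]
    exact mul_le_mul_right hle _
end
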